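/- Let γ < 0 be real, let k ≥ 2 be a natural number, and let 0 < q < 1. Define the failure rate of the NGNB(γ,k,q) distribution by r(y) = w_{γ,k,q}(y) / Σ_{j=y}^∞ w_{γ,k,q}(j). Then r is strictly decreasing: r(y) > r(y+1) for every natural number y (the NGNB has decreasing failure rate, DFR). -/

import Mathlib

/-!
Write `ρ m = w (m + 1) / w m` for the NGNB weights `w`. The binomial recursion gives
`ρ m = ((m + k) / (m + 1)) ^ γ * q`; for `k ≥ 2` the base decreases strictly in `m`, so for
`γ < 0` the ratio `ρ` is strictly increasing, i.e. `w` is strictly log-convex. For such a sequence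
`w (y + 1) * w (y + j) ≤ w y * w (y + 1 + j)` for all `j`, strictly for `j = 1`; summing over `j`
compares the two tail sums and gives `r (y + 1) < r y`.
-/

noncomputable def ngnbWeight (γ : ℝ) (k : ℕ) (q : ℝ) (y : ℕ) : ℝ :=
  ((y + k - 1).choose y : ℝ) ^ γ * q ^ y

noncomputable def ngnbFailureRate (γ : ℝ) (k : ℕ) (q : ℝ) (y : ℕ) : ℝ :=
  ngnbWeight γ k q y / ∑' j : ℕ, ngnbWeight γ k q (y + j)

section LogConvex

variable {w : ℕ → ℝ}

lemma mul_le_mul_succ_of_monotone_ratio (hw : ∀ n, 0 < w n)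
    (hρ : Monotone fun n => w (n + 1) / w n) {m n : ℕ} (hmn : m ≤ n) :
    w (m + 1) * w n ≤ w (n + 1) * w m :=
  (div_le_div_iff₀ (hw m) (hw n)).mp (hρ hmn)

lemma mul_lt_mul_succ_of_strictMono_ratio (hw : ∀ n, 0 < w n)
    (hρ : StrictMono fun n => w (n + 1) / w n) {m n : ℕ} (hmn : m < n) :
    w (m + 1) * w n < w (n + 1) * w m :=
  (div_lt_div_iff₀ (hw m) (hw n)).mp (hρ hmn)

theorem div_tsum_succ_lt_of_strictMono_ratio (hw : ∀ n, 0 < w n) (hs : Summable w)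
    (hρ : StrictMono fun n => w (n + 1) / w n) (y : ℕ) :
    w (y + 1) / ∑' j, w (y + 1 + j) < w y / ∑' j, w (y + j) := by
  have htail : ∀ a, Summable fun j => w (a + j) := fun a =>
    hs.comp_injective (add_right_injective a)
  have htail_pos : ∀ a, 0 < ∑' j, w (a + j) := fun a =>
    (htail a).tsum_pos (fun j => (hw _).le) 0 (hw _)
  rw [div_lt_div_iff₀ (htail_pos _) (htail_pos _), ← tsum_mul_left, ← tsum_mul_left]
  refine Summable.tsum_lt_tsum_of_nonneg (i := 1) (fun j => (mul_pos (hw _) (hw _)).le)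
    (fun j => ?_) ?_ ((htail _).mul_left _)
  · rw [add_right_comm, mul_comm (w y)]
    exact mul_le_mul_succ_of_monotone_ratio hw hρ.monotone (Nat.le_add_right y j)
  · rw [add_right_comm, mul_comm (w y)]
    exact mul_lt_mul_succ_of_strictMono_ratio hw hρ (Nat.lt_succ_self y)

end LogConvex

section NGNB

variable {γ q : ℝ} {k : ℕ}

lemma one_le_choose_add_sub_one (hk : 1 ≤ k) (y : ℕ) : (1 : ℝ) ≤ (y + k - 1).choose y := by
  exact_mod_cast Nat.choose_pos (by omega)

lemma ngnbWeight_pos (hk : 1 ≤ k) (hq : 0 < q) (y : ℕ) : 0 < ngnbWeight γ k q y :=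
  mul_pos (Real.rpow_pos_of_pos (one_pos.trans_le (one_le_choose_add_sub_one hk y)) γ)
    (pow_pos hq y)

lemma ngnbWeight_le_pow (hγ : γ ≤ 0) (hk : 1 ≤ k) (hq : 0 ≤ q) (y : ℕ) :
    ngnbWeight γ k q y ≤ q ^ y :=
  mul_le_of_le_one_left (pow_nonneg hq y)
    (Real.rpow_le_one_of_one_le_of_nonpos (one_le_choose_add_sub_one hk y) hγ)

lemma summable_ngnbWeight (hγ : γ ≤ 0) (hk : 1 ≤ k) (hq0 : 0 < q) (hq1 : q < 1) :
    Summable (ngnbWeight γ k q) :=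
  (summable_geometric_of_lt_one hq0.le hq1).of_nonneg_of_le
    (fun y => (ngnbWeight_pos hk hq0 y).le) (ngnbWeight_le_pow hγ hk hq0.le)

lemma choose_succ_eq_div_mul_choose (hk : 1 ≤ k) (m : ℕ) :
    ((m + 1 + k - 1).choose (m + 1) : ℝ) = (m + k) / (m + 1) * (m + k - 1).choose m := by
  obtain ⟨k, rfl⟩ := Nat.exists_eq_add_of_le' hk
  have h : ((m + k + 1 : ℕ) : ℝ) * (m + k).choose m = (m + k + 1).choose (m + 1) * (m + 1) := by
    exact_mod_cast Nat.add_one_mul_choose_eq (m + k) m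
  rw [show m + 1 + (k + 1) - 1 = m + k + 1 by omega, show m + (k + 1) - 1 = m + k by omega]
  push_cast at h ⊢
  field_simp
  linarith

lemma ngnbWeight_succ (hk : 1 ≤ k) (m : ℕ) :
    ngnbWeight γ k q (m + 1) = ((m + k : ℝ) / (m + 1)) ^ γ * q * ngnbWeight γ k q m := by
  rw [ngnbWeight, ngnbWeight, choose_succ_eq_div_mul_choose hk,
    Real.mul_rpow (by positivity) (Nat.cast_nonneg _)]
  ring

lemma ngnbWeight_succ_div (hk : 1 ≤ k) (hq : 0 < q) (m : ℕ) :
    ngnbWeight γ k q (m + 1) / ngnbWeight γ k q m = ((m + k : ℝ) / (m + 1)) ^ γ * q := by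
  rw [ngnbWeight_succ hk, mul_div_cancel_right₀ _ (ngnbWeight_pos hk hq m).ne']

lemma strictAnti_add_div_add_one {c : ℝ} (hc : 1 < c) :
    StrictAnti fun m : ℕ => ((m : ℝ) + c) / (m + 1) := by
  intro m n hmn
  have hmn' : (m : ℝ) < n := by exact_mod_cast hmn
  dsimp only
  rw [div_lt_div_iff₀ (by positivity) (by positivity)]
  nlinarith

lemma strictMono_ngnbWeight_ratio (hγ : γ < 0) (hk : 2 ≤ k) (hq : 0 < q) :
    StrictMono fun m => ngnbWeight γ k q (m + 1) / ngnbWeight γ k q m := by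
  intro m n hmn
  simp only [ngnbWeight_succ_div (by omega : 1 ≤ k) hq]
  gcongr ?_ * q
  exact Real.rpow_lt_rpow_of_neg (by positivity)
    (strictAnti_add_div_add_one (by exact_mod_cast hk) hmn) hγ

end NGNB

/-- For `γ < 0`, `k > 1` and `0 < q < 1`, the NGNB distribution has strictly
decreasing failure rate (DFR): `r(y) > r(y+1)` for every natural number `y`. -/
theorem ngnb_DFR (γ : ℝ) (hγ : γ < 0) (k : ℕ) (hk : 2 ≤ k)
    (q : ℝ) (hq0 : 0 < q) (hq1 : q < 1) (y : ℕ) :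
    ngnbFailureRate γ k q y > ngnbFailureRate γ k q (y + 1) :=
  div_tsum_succ_lt_of_strictMono_ratio (ngnbWeight_pos (by omega) hq0)
    (summable_ngnbWeight hγ.le (by omega) hq0 hq1) (strictMono_ngnbWeight_ratio hγ hk hq0) y
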